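/- arXiv:0911.1293 — 5 statements merged into one kernel-verified Lean document; each statement's English description precedes it below -/
import Mathlib

section
/- Let 1 ≤ p < ∞ and let f be a real measurable function on Ω that does not belong to L^p(Ω). Then for every n, R_n^p(f) = +∞. -/
open MeasureTheory Filter Topology
open scoped ENNReal RealInnerProductSpace Classical

/-- The nonlocal double-integral regularization functional
`R^p_φ(f) = ∫_Ω ∫_Ω |f x - f y|^p / |x-y|^p · φ(x-y) dy dx`,
with value `+∞` when the double integral diverges. -/
noncomputable def Rnp (N : ℕ) (Ω : Set (EuclideanSpace ℝ (Fin N)))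
    (φ : EuclideanSpace ℝ (Fin N) → ℝ) (p : ℝ)
    (f : EuclideanSpace ℝ (Fin N) → ℝ) : ℝ≥0∞ :=
  ∫⁻ x in Ω, ∫⁻ y in Ω, ENNReal.ofReal (|f x - f y| ^ p / ‖x - y‖ ^ p * φ (x - y))

/-- `Ω` has a `C¹` boundary: near each boundary point, `Ω` is the sublevel set of a
`C¹` function with nonvanishing differential. -/
def HasC1Boundary (N : ℕ) (Ω : Set (EuclideanSpace ℝ (Fin N))) : Prop :=
  ∀ x ∈ frontier Ω, ∃ (u : Set (EuclideanSpace ℝ (Fin N)))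
    (F : EuclideanSpace ℝ (Fin N) → ℝ),
      IsOpen u ∧ x ∈ u ∧ ContDiffOn ℝ 1 F u ∧ (∀ y ∈ u, fderiv ℝ F y ≠ 0) ∧
      Ω ∩ u = {y ∈ u | F y < 0}

/-- The kernels `φ_n` are nonnegative, radially symmetric, radially decreasing
`L¹` functions with `∫_Ω φ_n = 1` whose mass concentrates at the origin. -/
structure IsKernelSeq (N : ℕ) (Ω : Set (EuclideanSpace ℝ (Fin N)))
    (φ : ℕ → EuclideanSpace ℝ (Fin N) → ℝ) : Prop where
  nonneg : ∀ n x, 0 ≤ φ n x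
  radial : ∀ n x y, ‖x‖ = ‖y‖ → φ n x = φ n y
  radialDecreasing : ∀ n x y, ‖x‖ ≤ ‖y‖ → φ n y ≤ φ n x
  integrable : ∀ n, Integrable (φ n) volume
  normalized : ∀ n, ∫ x in Ω, φ n x = 1
  concentrates : ∀ δ : ℝ, 0 < δ →
    Tendsto (fun n => ∫ x in {x : EuclideanSpace ℝ (Fin N) | δ < ‖x‖}, φ n x)
      atTop (𝓝 0)

/-- The total variation seminorm `|Df|` on `Ω`, as a supremum over smooth compactly
supported vector fields bounded by `1` of `∫_Ω f ∇·ψ`. -/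
noncomputable def TVSeminorm (N : ℕ) (Ω : Set (EuclideanSpace ℝ (Fin N)))
    (f : EuclideanSpace ℝ (Fin N) → ℝ) : ℝ≥0∞ :=
  ⨆ (ψ : EuclideanSpace ℝ (Fin N) → EuclideanSpace ℝ (Fin N)) (_ : ContDiff ℝ (⊤ : ℕ∞) ψ)
    (_ : HasCompactSupport ψ) (_ : tsupport ψ ⊆ Ω) (_ : ∀ x, ‖ψ x‖ ≤ 1),
    ENNReal.ofReal (∫ x in Ω,
      f x * ∑ i, fderiv ℝ (fun y => ψ y i) x (EuclideanSpace.single i 1))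

/-- `f ∈ BV(Ω)`: `f ∈ L¹(Ω)` with finite total variation seminorm. -/
def MemBV (N : ℕ) (Ω : Set (EuclideanSpace ℝ (Fin N)))
    (f : EuclideanSpace ℝ (Fin N) → ℝ) : Prop :=
  MemLp f 1 (volume.restrict Ω) ∧ TVSeminorm N Ω f < ⊤

/-- `g` is a weak gradient of `f` on `Ω`. -/
def IsWeakGradient (N : ℕ) (Ω : Set (EuclideanSpace ℝ (Fin N)))
    (f : EuclideanSpace ℝ (Fin N) → ℝ)
    (g : EuclideanSpace ℝ (Fin N) → EuclideanSpace ℝ (Fin N)) : Prop :=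
  ∀ ψ : EuclideanSpace ℝ (Fin N) → ℝ, ContDiff ℝ (⊤ : ℕ∞) ψ → HasCompactSupport ψ →
    tsupport ψ ⊆ Ω → ∀ i : Fin N,
      ∫ x in Ω, f x * fderiv ℝ ψ x (EuclideanSpace.single i 1) =
        - ∫ x in Ω, g x i * ψ x

/-- `f ∈ W^{1,p}(Ω)`: `f ∈ L^p(Ω)` and `f` has a weak gradient in `L^p(Ω)`. -/
def MemW1p (N : ℕ) (Ω : Set (EuclideanSpace ℝ (Fin N))) (p : ℝ)
    (f : EuclideanSpace ℝ (Fin N) → ℝ) : Prop :=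
  MemLp f (ENNReal.ofReal p) (volume.restrict Ω) ∧
  ∃ g, MemLp g (ENNReal.ofReal p) (volume.restrict Ω) ∧ IsWeakGradient N Ω f g

/-- The Dirichlet energy `∫_Ω |∇f|^p dx`, computed via any `L^p` weak gradient of `f`
(the value is `+∞` if no such gradient exists; weak gradients are a.e. unique). -/
noncomputable def SobolevEnergy (N : ℕ) (Ω : Set (EuclideanSpace ℝ (Fin N))) (p : ℝ)
    (f : EuclideanSpace ℝ (Fin N) → ℝ) : ℝ≥0∞ :=
  ⨅ (g : EuclideanSpace ℝ (Fin N) → EuclideanSpace ℝ (Fin N))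
    (_ : MemLp g (ENNReal.ofReal p) (volume.restrict Ω))
    (_ : IsWeakGradient N Ω f g),
    ∫⁻ x in Ω, ENNReal.ofReal (‖g x‖ ^ p)

/-- The constant `K_{p,N}`: for `N > 1` the mean of `|⟨e,σ⟩|^p` over the unit sphere
with respect to the `(N-1)`-dimensional Hausdorff measure (`e` a fixed unit vector),
and `1` for `N = 1`. -/
noncomputable def Kconst (N : ℕ) (p : ℝ) : ℝ :=
  if h : N ≤ 1 then 1 else
    (∫ σ in Metric.sphere (0 : EuclideanSpace ℝ (Fin N)) 1,
        |⟪(EuclideanSpace.single (⟨0, by omega⟩ : Fin N) (1 : ℝ) :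
            EuclideanSpace ℝ (Fin N)), σ⟫| ^ p ∂(μH[(N : ℝ) - 1])) /
      (μH[(N : ℝ) - 1] (Metric.sphere (0 : EuclideanSpace ℝ (Fin N)) 1)).toReal

/-- The fidelity term `S(f) = (1/2)∫_Ω (f - f^δ)²`, with value `+∞` if
`f - f^δ ∉ L²(Ω)`. -/
noncomputable def Fid (N : ℕ) (Ω : Set (EuclideanSpace ℝ (Fin N)))
    (fδ f : EuclideanSpace ℝ (Fin N) → ℝ) : ℝ≥0∞ :=
  2⁻¹ * ∫⁻ x in Ω, ENNReal.ofReal ((f x - fδ x) ^ 2)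

/-- The regularized functional
`F_n^p(f) = (1/2)∫_Ω (f - f^δ)² + (α / K_{p,N}) R_n^p(f)`. -/
noncomputable def Fnp (N : ℕ) (Ω : Set (EuclideanSpace ℝ (Fin N)))
    (φ : EuclideanSpace ℝ (Fin N) → ℝ) (p α : ℝ)
    (fδ f : EuclideanSpace ℝ (Fin N) → ℝ) : ℝ≥0∞ :=
  Fid N Ω fδ f + ENNReal.ofReal (α / Kconst N p) * Rnp N Ω φ p f

theorem stmt_0
    (N : ℕ) (hN : 1 ≤ N) (Ω : Set (EuclideanSpace ℝ (Fin N)))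
    (hΩo : IsOpen Ω) (hΩb : Bornology.IsBounded Ω) (hΩc : HasC1Boundary N Ω)
    (φ : ℕ → EuclideanSpace ℝ (Fin N) → ℝ) (hφ : IsKernelSeq N Ω φ)
    (p : ℝ) (hp : 1 ≤ p)
    (f : EuclideanSpace ℝ (Fin N) → ℝ) (hf : Measurable f)
    (hfLp : ¬ MemLp f (ENNReal.ofReal p) (volume.restrict Ω)) (n : ℕ) :
    Rnp N Ω (φ n) p f = ⊤ := by
  by_contra hR
  have hp0 : (0:ℝ) < p := lt_of_lt_of_le one_pos hp
  have hΩm : MeasurableSet Ω := hΩo.measurableSet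
  haveI : Nonempty (Fin N) := ⟨⟨0, hN⟩⟩
  haveI : Nontrivial (EuclideanSpace ℝ (Fin N)) := inferInstance
  -- Step 1: find a point z₀ ≠ 0 where φ n is positive
  obtain ⟨z₀, hz₀, hc⟩ : ∃ z₀ : EuclideanSpace ℝ (Fin N), z₀ ≠ 0 ∧ 0 < φ n z₀ := by
    by_contra h
    push_neg at h
    have h0 : ∀ᵐ z ∂(volume.restrict Ω), φ n z = 0 := by
      have hz : ∀ᵐ z : EuclideanSpace ℝ (Fin N) ∂volume, z ≠ 0 := by
        rw [ae_iff]
        have : {z : EuclideanSpace ℝ (Fin N) | ¬ z ≠ 0} = {0} := by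
          ext z; simp
        rw [this]
        exact measure_singleton 0
      refine ae_restrict_of_ae ?_
      filter_upwards [hz] with z hz
      exact le_antisymm (h z hz) (hφ.nonneg n z)
    have h1 := hφ.normalized n
    rw [integral_eq_zero_of_ae h0] at h1
    norm_num at h1
  set r := ‖z₀‖ with hrdef
  have hr : 0 < r := norm_pos_iff.mpr hz₀
  set c := φ n z₀ with hcdef
  have hφc : ∀ z : EuclideanSpace ℝ (Fin N), ‖z‖ ≤ r → c ≤ φ n z :=
    fun z hz => hφ.radialDecreasing n z z₀ hz
  -- diameter bound
  obtain ⟨R, hRb⟩ := hΩb.subset_closedBall 0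
  set D := |R| + |R| + 1 with hD
  have hD0 : 0 < D := by positivity
  have hdist : ∀ x ∈ Ω, ∀ y ∈ Ω, ‖x - y‖ ≤ D := by
    intro x hx y hy
    have hx' : ‖x‖ ≤ R := by simpa [dist_eq_norm] using hRb hx
    have hy' : ‖y‖ ≤ R := by simpa [dist_eq_norm] using hRb hy
    calc ‖x - y‖ ≤ ‖x‖ + ‖y‖ := norm_sub_le x y
    _ ≤ |R| + |R| := add_le_add (hx'.trans (le_abs_self R)) (hy'.trans (le_abs_self R))
    _ ≤ D := by rw [hD]; linarith
  set κ := c / D ^ p with hκ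
  have hκ0 : 0 < κ := div_pos hc (Real.rpow_pos_of_pos hD0 p)
  set g : EuclideanSpace ℝ (Fin N) → EuclideanSpace ℝ (Fin N) → ℝ≥0∞ :=
    fun x y => if ‖x - y‖ ≤ r then ENNReal.ofReal (κ * |f x - f y| ^ p) else 0 with hg
  -- pointwise comparison on Ω × Ω
  have hpt : ∀ x ∈ Ω, ∀ y ∈ Ω,
      g x y ≤ ENNReal.ofReal (|f x - f y| ^ p / ‖x - y‖ ^ p * φ n (x - y)) := by
    intro x hx y hy
    simp only [hg]
    split_ifs with hxy
    · rcases eq_or_ne x y with rfl | hne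
      · simp [Real.zero_rpow hp0.ne']
      · have hn0 : 0 < ‖x - y‖ := by rwa [norm_pos_iff, sub_ne_zero]
        apply ENNReal.ofReal_le_ofReal
        have h1 : ‖x - y‖ ^ p ≤ D ^ p := Real.rpow_le_rpow hn0.le (hdist x hx y hy) hp0.le
        have h2 : c ≤ φ n (x - y) := hφc _ hxy
        have habs : (0:ℝ) ≤ |f x - f y| ^ p := Real.rpow_nonneg (abs_nonneg _) p
        calc κ * |f x - f y| ^ p = |f x - f y| ^ p / D ^ p * c := by rw [hκ]; ring
        _ ≤ |f x - f y| ^ p / ‖x - y‖ ^ p * φ n (x - y) := by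
            refine mul_le_mul ?_ h2 hc.le ?_
            · exact div_le_div_of_nonneg_left habs (Real.rpow_pos_of_pos hn0 p) h1
            · positivity
    · exact zero_le
  -- measurability of g
  have hgm : Measurable (Function.uncurry g) := by
    simp only [hg, Function.uncurry]
    refine Measurable.ite ?_ ?_ measurable_const
    · exact measurableSet_le (by fun_prop) measurable_const
    · refine Measurable.ennreal_ofReal ?_
      exact ((((hf.comp measurable_fst).sub (hf.comp measurable_snd)).abs.pow
        measurable_const).const_mul κ)
  have hJ : (∫⁻ x in Ω, ∫⁻ y in Ω, g x y ∂volume ∂volume) ≠ ⊤ := by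
    refine ne_top_of_le_ne_top hR ?_
    rw [Rnp]
    refine setLIntegral_mono' hΩm fun x hx => ?_
    exact setLIntegral_mono' hΩm fun y hy => hpt x hx y hy
  have hinner : Measurable fun x => ∫⁻ y in Ω, g x y ∂volume :=
    hgm.lintegral_prod_right'
  have hae : ∀ᵐ x ∂(volume : Measure (EuclideanSpace ℝ (Fin N))),
      x ∈ Ω → ∫⁻ y in Ω, g x y ∂volume < ⊤ :=
    (ae_restrict_iff' hΩm).mp (ae_lt_top hinner hJ)
  have hvolΩ : volume Ω < ⊤ := hΩb.measure_lt_top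
  -- key local estimate
  have key : ∀ x ∈ Ω, (∫⁻ y in Ω, g x y ∂volume) < ⊤ →
      (∫⁻ z in Ω ∩ Metric.ball x r, ENNReal.ofReal (|f z| ^ p) ∂volume) < ⊤ := by
    intro x hx hfin
    have hA : MeasurableSet (Ω ∩ Metric.ball x r) := hΩm.inter Metric.isOpen_ball.measurableSet
    have hle : ∀ z ∈ Ω ∩ Metric.ball x r,
        ENNReal.ofReal (|f z| ^ p) ≤
          (2:ℝ≥0∞) ^ p * (ENNReal.ofReal (|f x - f z| ^ p) + ENNReal.ofReal (|f x| ^ p)) := by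
      intro z _
      have h2 : ENNReal.ofReal |f z| ≤ ENNReal.ofReal |f x - f z| + ENNReal.ofReal |f x| := by
        rw [← ENNReal.ofReal_add (abs_nonneg _) (abs_nonneg _)]
        apply ENNReal.ofReal_le_ofReal
        calc |f z| = |(f z - f x) + f x| := by ring_nf
        _ ≤ |f z - f x| + |f x| := abs_add_le _ _
        _ = |f x - f z| + |f x| := by rw [abs_sub_comm]
      calc ENNReal.ofReal (|f z| ^ p) = (ENNReal.ofReal |f z|) ^ p :=
            (ENNReal.ofReal_rpow_of_nonneg (abs_nonneg _) hp0.le).symm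
      _ ≤ (ENNReal.ofReal |f x - f z| + ENNReal.ofReal |f x|) ^ p :=
            ENNReal.rpow_le_rpow h2 hp0.le
      _ ≤ (2:ℝ≥0∞) ^ (p - 1) * ((ENNReal.ofReal |f x - f z|) ^ p + (ENNReal.ofReal |f x|) ^ p) :=
            ENNReal.rpow_add_le_mul_rpow_add_rpow _ _ hp
      _ ≤ (2:ℝ≥0∞) ^ p * (ENNReal.ofReal (|f x - f z| ^ p) + ENNReal.ofReal (|f x| ^ p)) := by
            rw [ENNReal.ofReal_rpow_of_nonneg (abs_nonneg _) hp0.le,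
              ENNReal.ofReal_rpow_of_nonneg (abs_nonneg _) hp0.le]
            gcongr
            · exact one_le_two
            · linarith
    have step2 : (∫⁻ z in Ω ∩ Metric.ball x r, ENNReal.ofReal (|f x - f z| ^ p) ∂volume) < ⊤ := by
      have hκne : ENNReal.ofReal κ ≠ 0 := (ENNReal.ofReal_pos.mpr hκ0).ne'
      have hbound : ∀ z ∈ Ω ∩ Metric.ball x r,
          ENNReal.ofReal (|f x - f z| ^ p) ≤ (ENNReal.ofReal κ)⁻¹ * g x z := by
        intro z hz
        have hzr : ‖x - z‖ ≤ r := by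
          have h := hz.2
          rw [Metric.mem_ball, dist_comm, dist_eq_norm] at h
          exact h.le
        simp only [hg, if_pos hzr]
        rw [ENNReal.ofReal_mul hκ0.le, ← mul_assoc,
          ENNReal.inv_mul_cancel hκne ENNReal.ofReal_ne_top, one_mul]
      calc (∫⁻ z in Ω ∩ Metric.ball x r, ENNReal.ofReal (|f x - f z| ^ p) ∂volume)
          ≤ ∫⁻ z in Ω ∩ Metric.ball x r, (ENNReal.ofReal κ)⁻¹ * g x z ∂volume :=
            setLIntegral_mono' hA hbound
      _ = (ENNReal.ofReal κ)⁻¹ * ∫⁻ z in Ω ∩ Metric.ball x r, g x z ∂volume :=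
            lintegral_const_mul' _ _ (ENNReal.inv_ne_top.mpr hκne)
      _ ≤ (ENNReal.ofReal κ)⁻¹ * ∫⁻ z in Ω, g x z ∂volume := by
            gcongr
            exact Set.inter_subset_left
      _ < ⊤ := ENNReal.mul_lt_top (by simpa using hκ0) hfin
    have h2top : (2:ℝ≥0∞) ^ p < ⊤ := by
      exact ENNReal.rpow_lt_top_of_nonneg hp0.le ENNReal.ofNat_ne_top
    calc (∫⁻ z in Ω ∩ Metric.ball x r, ENNReal.ofReal (|f z| ^ p) ∂volume)
        ≤ ∫⁻ z in Ω ∩ Metric.ball x r,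
            (2:ℝ≥0∞) ^ p * (ENNReal.ofReal (|f x - f z| ^ p) + ENNReal.ofReal (|f x| ^ p)) ∂volume :=
          setLIntegral_mono' hA hle
    _ = (2:ℝ≥0∞) ^ p * ∫⁻ z in Ω ∩ Metric.ball x r,
            (ENNReal.ofReal (|f x - f z| ^ p) + ENNReal.ofReal (|f x| ^ p)) ∂volume :=
          lintegral_const_mul' _ _ h2top.ne
    _ = (2:ℝ≥0∞) ^ p * ((∫⁻ z in Ω ∩ Metric.ball x r, ENNReal.ofReal (|f x - f z| ^ p) ∂volume)
          + ENNReal.ofReal (|f x| ^ p) * volume (Ω ∩ Metric.ball x r)) := by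
          rw [lintegral_add_right _ measurable_const, setLIntegral_const]
    _ < ⊤ := by
          refine ENNReal.mul_lt_top h2top (ENNReal.add_lt_top.mpr ⟨step2, ?_⟩)
          exact ENNReal.mul_lt_top ENNReal.ofReal_lt_top
            (lt_of_le_of_lt (measure_mono Set.inter_subset_left) hvolΩ)
  -- covering argument
  have hK : IsCompact (closure Ω) := hΩb.isCompact_closure
  obtain ⟨t, htK, htcov⟩ := hK.elim_nhds_subcover (fun x => Metric.ball x (r/2))
    (fun x _ => Metric.ball_mem_nhds x (by linarith))
  have hchoice : ∀ x ∈ t, ∃ y, y ∈ Ω ∧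
      (∫⁻ z in Ω ∩ Metric.ball y r, ENNReal.ofReal (|f z| ^ p) ∂volume) < ⊤ ∧
      Metric.ball x (r/2) ⊆ Metric.ball y r := by
    intro x hxt
    have hxK : x ∈ closure Ω := htK x hxt
    have hV : (Metric.ball x (r/2) ∩ Ω).Nonempty := by
      obtain ⟨y, hyΩ, hd⟩ := Metric.mem_closure_iff.mp hxK (r/2) (by linarith)
      exact ⟨y, by rwa [Metric.mem_ball, dist_comm], hyΩ⟩
    have hVpos : 0 < volume (Metric.ball x (r/2) ∩ Ω) :=
      (Metric.isOpen_ball.inter hΩo).measure_pos volume hV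
    obtain ⟨z, hzV, hzg⟩ : ∃ z ∈ Metric.ball x (r/2) ∩ Ω,
        (z ∈ Ω → ∫⁻ y in Ω, g z y ∂volume < ⊤) := by
      by_contra hcon
      push_neg at hcon
      have hsub : Metric.ball x (r/2) ∩ Ω ⊆
          {z | ¬ (z ∈ Ω → ∫⁻ y in Ω, g z y ∂volume < ⊤)} := by
        intro z hz
        simp only [Set.mem_setOf_eq, Classical.not_imp, not_lt]
        exact hcon z hz
      exact absurd (measure_mono_null hsub (ae_iff.mp hae)) hVpos.ne'
    refine ⟨z, hzV.2, key z hzV.2 (hzg hzV.2), ?_⟩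
    intro w hw
    rw [Metric.mem_ball] at hw ⊢
    have hzx : dist z x < r/2 := hzV.1
    calc dist w z ≤ dist w x + dist x z := dist_triangle _ _ _
    _ < r/2 + r/2 := add_lt_add hw (by rwa [dist_comm])
    _ = r := by ring
  choose y hyΩ hyfin hycov using hchoice
  have hcov2 : Ω ⊆ ⋃ x : {x // x ∈ t}, (Ω ∩ Metric.ball (y x.1 x.2) r) := by
    intro w hw
    have hw' := htcov (subset_closure hw)
    rw [Set.mem_iUnion₂] at hw'
    obtain ⟨x, hxt, hwx⟩ := hw'
    exact Set.mem_iUnion.mpr ⟨⟨x, hxt⟩, hw, hycov x hxt hwx⟩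
  have hfinal : (∫⁻ x in Ω, ENNReal.ofReal (|f x| ^ p) ∂volume) < ⊤ := by
    calc (∫⁻ x in Ω, ENNReal.ofReal (|f x| ^ p) ∂volume)
        ≤ ∫⁻ x in ⋃ x : {x // x ∈ t}, (Ω ∩ Metric.ball (y x.1 x.2) r),
            ENNReal.ofReal (|f x| ^ p) ∂volume := lintegral_mono_set hcov2
    _ ≤ ∑' x : {x // x ∈ t}, ∫⁻ z in Ω ∩ Metric.ball (y x.1 x.2) r,
            ENNReal.ofReal (|f z| ^ p) ∂volume := lintegral_iUnion_le _ _
    _ < ⊤ := by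
          rw [tsum_fintype]
          exact ENNReal.sum_lt_top.mpr fun x _ => hyfin x.1 x.2
  apply hfLp
  refine ⟨hf.aestronglyMeasurable, ?_⟩
  rw [eLpNorm_lt_top_iff_lintegral_rpow_enorm_lt_top
      (ENNReal.ofReal_pos.mpr hp0).ne' (by simp)]
  have htR : (ENNReal.ofReal p).toReal = p := ENNReal.toReal_ofReal hp0.le
  rw [htR]
  have : ∀ x, ‖f x‖ₑ ^ p = ENNReal.ofReal (|f x| ^ p) := by
    intro x
    rw [Real.enorm_eq_ofReal_abs, ENNReal.ofReal_rpow_of_nonneg (abs_nonneg _) hp0.le]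
  simpa only [this] using hfinal
end

section
/- Let 1 ≤ p < ∞, α > 0, and f^δ ∈ L²_⋄(Ω) with mean value zero, and let f_n be the unique minimizer of F_n^p over L²_⋄(Ω). Then f_n is also a minimizer of F_n^p over all of L¹(Ω), where F_n^p(g) is understood to be +∞ for g ∈ L¹(Ω) \ L²(Ω). -/
open MeasureTheory Filter Topology
open scoped ENNReal RealInnerProductSpace Classical

theorem stmt_5
    (N : ℕ) (hN : 1 ≤ N) (Ω : Set (EuclideanSpace ℝ (Fin N)))
    (hΩo : IsOpen Ω) (hΩb : Bornology.IsBounded Ω) (hΩc : HasC1Boundary N Ω)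
    (φ : ℕ → EuclideanSpace ℝ (Fin N) → ℝ) (hφ : IsKernelSeq N Ω φ)
    (p : ℝ) (hp : 1 ≤ p) (α : ℝ) (hα : 0 < α)
    (fδ : EuclideanSpace ℝ (Fin N) → ℝ) (hfδ : MemLp fδ 2 (volume.restrict Ω))
    (hfδmean : ∫ x in Ω, fδ x = 0) (n : ℕ)
    (fmin : EuclideanSpace ℝ (Fin N) → ℝ)
    (hfmin : MemLp fmin 2 (volume.restrict Ω)) (hfminmean : (∫ x in Ω, fmin x) = 0)
    (hmin : ∀ g : EuclideanSpace ℝ (Fin N) → ℝ, MemLp g 2 (volume.restrict Ω) →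
      (∫ x in Ω, g x) = 0 → Fnp N Ω (φ n) p α fδ fmin ≤ Fnp N Ω (φ n) p α fδ g)
    (huniq : ∀ g : EuclideanSpace ℝ (Fin N) → ℝ, MemLp g 2 (volume.restrict Ω) →
      (∫ x in Ω, g x) = 0 → Fnp N Ω (φ n) p α fδ g ≤ Fnp N Ω (φ n) p α fδ fmin →
      g =ᵐ[volume.restrict Ω] fmin) :
    ∀ g : EuclideanSpace ℝ (Fin N) → ℝ, MemLp g 1 (volume.restrict Ω) →
      Fnp N Ω (φ n) p α fδ fmin ≤ Fnp N Ω (φ n) p α fδ g := by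
  intro g hg1
  by_cases hg2 : MemLp g 2 (volume.restrict Ω)
  · -- g ∈ L²: shift by its mean and compare
    have hfin : volume Ω < ⊤ := hΩb.measure_lt_top
    haveI : IsFiniteMeasure (volume.restrict Ω) := by
      constructor
      rwa [Measure.restrict_apply_univ]
    set c : ℝ := (∫ x in Ω, g x) / (volume Ω).toReal with hc
    set g' : EuclideanSpace ℝ (Fin N) → ℝ := fun x => g x - c with hg'def
    have hg'2 : MemLp g' 2 (volume.restrict Ω) := hg2.sub (memLp_const c)
    have hgint : Integrable g (volume.restrict Ω) := memLp_one_iff_integrable.mp hg1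
    have hmean' : (∫ x in Ω, g' x) = 0 := by
      rw [hg'def]
      rw [integral_sub hgint (integrable_const c), integral_const, measureReal_def,
        Measure.restrict_apply MeasurableSet.univ, Set.univ_inter, smul_eq_mul]
      by_cases hz : (volume Ω).toReal = 0
      · have h0 : volume Ω = 0 :=
          ((ENNReal.toReal_eq_zero_iff _).mp hz).resolve_right hfin.ne
        have : volume.restrict Ω = 0 := by
          rw [Measure.restrict_eq_zero]; exact h0
        simp [hc, hz, this]
      · have hmul : (volume Ω).toReal * c = ∫ x in Ω, g x := by rw [hc]; field_simp
        rw [hmul, sub_self]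
    -- Rnp is unchanged by a constant shift
    have hR : Rnp N Ω (φ n) p g' = Rnp N Ω (φ n) p g := by
      unfold Rnp
      refine lintegral_congr fun x => lintegral_congr fun y => ?_
      have : g' x - g' y = g x - g y := by simp [hg'def]
      rw [this]
    -- Fidelity decreases
    have hh2 : MemLp (fun x => g x - fδ x) 2 (volume.restrict Ω) := hg2.sub hfδ
    have hh'2 : MemLp (fun x => g' x - fδ x) 2 (volume.restrict Ω) := hg'2.sub hfδ
    have hhsq : Integrable (fun x => (g x - fδ x) ^ 2) (volume.restrict Ω) :=
      (memLp_two_iff_integrable_sq hh2.aestronglyMeasurable).mp hh2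
    have hh'sq : Integrable (fun x => (g' x - fδ x) ^ 2) (volume.restrict Ω) :=
      (memLp_two_iff_integrable_sq hh'2.aestronglyMeasurable).mp hh'2
    have hh'int : Integrable (fun x => g' x - fδ x) (volume.restrict Ω) :=
      hh'2.integrable one_le_two
    have hfδint : Integrable fδ (volume.restrict Ω) := hfδ.integrable one_le_two
    have hg'int : Integrable g' (volume.restrict Ω) := hg'2.integrable one_le_two
    have hh'mean : (∫ x in Ω, (g' x - fδ x)) = 0 := by
      rw [integral_sub hg'int hfδint, hmean', hfδmean, sub_zero]
    have hintineq : (∫ x in Ω, (g' x - fδ x) ^ 2) ≤ ∫ x in Ω, (g x - fδ x) ^ 2 := by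
      have hexp : (fun x => (g x - fδ x) ^ 2) =
          fun x => (g' x - fδ x) ^ 2 + (2 * c * (g' x - fδ x) + c ^ 2) := by
        funext x; simp only [hg'def]; ring
      have i1 : Integrable (fun x => 2 * c * (g' x - fδ x)) (volume.restrict Ω) :=
        hh'int.const_mul (2 * c)
      have i2 : Integrable (fun x => 2 * c * (g' x - fδ x) + c ^ 2)
          (volume.restrict Ω) := by exact i1.add (integrable_const (c ^ 2))
      rw [hexp, integral_add hh'sq i2, integral_add i1 (integrable_const (c ^ 2)),
        integral_const_mul, hh'mean, mul_zero, zero_add, integral_const, smul_eq_mul, measureReal_def]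
      nlinarith [sq_nonneg c,
        ENNReal.toReal_nonneg (a := (volume.restrict Ω) Set.univ)]
    have hFid : Fid N Ω fδ g' ≤ Fid N Ω fδ g := by
      unfold Fid
      refine mul_le_mul_right ?_ _
      rw [← ofReal_integral_eq_lintegral_ofReal hh'sq
          (Filter.Eventually.of_forall fun x => sq_nonneg _),
        ← ofReal_integral_eq_lintegral_ofReal hhsq
          (Filter.Eventually.of_forall fun x => sq_nonneg _)]
      exact ENNReal.ofReal_le_ofReal hintineq
    calc Fnp N Ω (φ n) p α fδ fmin ≤ Fnp N Ω (φ n) p α fδ g' :=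
          hmin g' hg'2 hmean'
      _ ≤ Fnp N Ω (φ n) p α fδ g := by
          unfold Fnp; rw [hR]; exact add_le_add_left hFid _
  · -- g ∉ L²: the fidelity term is infinite
    have hFid : Fid N Ω fδ g = ⊤ := by
      unfold Fid
      rcases eq_or_ne (∫⁻ x in Ω, ENNReal.ofReal ((g x - fδ x) ^ 2)) ⊤ with h | h
      · rw [h, ENNReal.mul_top (by norm_num)]
      · exfalso
        apply hg2
        have hmeas : AEStronglyMeasurable (fun x => g x - fδ x) (volume.restrict Ω) :=
          hg1.aestronglyMeasurable.sub hfδ.aestronglyMeasurable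
        have hmeas2 : AEStronglyMeasurable (fun x => (g x - fδ x) ^ 2)
            (volume.restrict Ω) := by
          have := hmeas.mul hmeas
          simpa [sq, Pi.mul_def] using this
        have hint : Integrable (fun x => (g x - fδ x) ^ 2) (volume.restrict Ω) := by
          refine ⟨hmeas2, ?_⟩
          rw [hasFiniteIntegral_iff_ofReal
            (Filter.Eventually.of_forall fun x => sq_nonneg _)]
          exact lt_top_iff_ne_top.mpr h
        have hgm : MemLp (fun x => g x - fδ x) 2 (volume.restrict Ω) :=
          (memLp_two_iff_integrable_sq hmeas).mpr hint
        have : MemLp (fun x => (g x - fδ x) + fδ x) 2 (volume.restrict Ω) :=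
          hgm.add hfδ
        simpa using this
    unfold Fnp
    rw [hFid, top_add]
    exact le_top
end

section
/- Let 1 ≤ p < ∞, α > 0 and f^δ ∈ L²_⋄(Ω) with mean value zero, and let f_n be the unique minimizer of F_n^p over L²(Ω). Then ∫_Ω (f_n − f^δ)(x) dx = 0; that is, the mean value of the minimizer f_n is equal to the mean value of f^δ, namely zero. -/
open MeasureTheory Filter Topology
open scoped ENNReal RealInnerProductSpace Classical

theorem stmt_8
    (N : ℕ) (hN : 1 ≤ N) (Ω : Set (EuclideanSpace ℝ (Fin N)))
    (hΩo : IsOpen Ω) (hΩb : Bornology.IsBounded Ω) (hΩc : HasC1Boundary N Ω)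
    (φ : ℕ → EuclideanSpace ℝ (Fin N) → ℝ) (hφ : IsKernelSeq N Ω φ)
    (p : ℝ) (hp : 1 ≤ p) (α : ℝ) (hα : 0 < α)
    (fδ : EuclideanSpace ℝ (Fin N) → ℝ) (hfδ : MemLp fδ 2 (volume.restrict Ω))
    (hfδmean : ∫ x in Ω, fδ x = 0) (n : ℕ)
    (fmin : EuclideanSpace ℝ (Fin N) → ℝ)
    (hfmin : MemLp fmin 2 (volume.restrict Ω))
    (hmin : ∀ g : EuclideanSpace ℝ (Fin N) → ℝ, MemLp g 2 (volume.restrict Ω) →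
      Fnp N Ω (φ n) p α fδ fmin ≤ Fnp N Ω (φ n) p α fδ g)
    (huniq : ∀ g : EuclideanSpace ℝ (Fin N) → ℝ, MemLp g 2 (volume.restrict Ω) →
      Fnp N Ω (φ n) p α fδ g ≤ Fnp N Ω (φ n) p α fδ fmin →
      g =ᵐ[volume.restrict Ω] fmin) :
    ∫ x in Ω, (fmin x - fδ x) = 0 := by
  have hμfin : volume Ω < ⊤ := hΩb.measure_lt_top
  haveI : IsFiniteMeasure (volume.restrict Ω) :=
    ⟨by simpa [Measure.restrict_apply_univ] using hμfin⟩
  by_cases hV0 : volume Ω = 0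
  · rw [Measure.restrict_eq_zero.mpr hV0, integral_zero_measure]
  set μ := volume.restrict Ω with hμdef
  set h : EuclideanSpace ℝ (Fin N) → ℝ := fun x => fmin x - fδ x with hh
  have hh2 : MemLp h 2 μ := hfmin.sub hfδ
  have hhint : Integrable h μ := hh2.integrable one_le_two
  have hsq : Integrable (fun x => h x ^ 2) μ := hh2.integrable_sq
  set V : ℝ := (volume Ω).toReal with hVdef
  have hV : 0 < V := ENNReal.toReal_pos hV0 hμfin.ne
  set c : ℝ := (∫ x, h x ∂μ) / V with hcdef
  have hintc : ∫ x, h x ∂μ = c * V := by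
    rw [hcdef]; field_simp
  set g : EuclideanSpace ℝ (Fin N) → ℝ := fun x => fmin x - c with hg
  have hgL2 : MemLp g 2 μ := hfmin.sub (memLp_const c)
  have hgh : ∀ x, g x - fδ x = h x - c := fun x => by simp [hg, hh]; ring
  have hgsq2 : MemLp (fun x => h x - c) 2 μ := hh2.sub (memLp_const c)
  have hsq' : Integrable (fun x => (h x - c) ^ 2) μ := hgsq2.integrable_sq
  have hμuniv : (μ Set.univ).toReal = V := by
    rw [hμdef, Measure.restrict_apply_univ]
  -- key real computation: ∫ (h - c)² = ∫ h² - c² V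
  have hexp : ∫ x, (h x - c) ^ 2 ∂μ = (∫ x, h x ^ 2 ∂μ) - c ^ 2 * V := by
    have e1 : ∀ x, (h x - c) ^ 2 = h x ^ 2 - (2 * c) * h x + c ^ 2 := fun x => by ring
    simp only [e1]
    have i1 : Integrable (fun x => h x ^ 2 - 2 * c * h x) μ :=
      hsq.sub (hhint.const_mul (2 * c))
    rw [integral_add i1 (integrable_const _),
      integral_sub hsq (hhint.const_mul (2 * c)), integral_const, measureReal_def, hμuniv,
      integral_const_mul, hintc, smul_eq_mul]
    ring
  -- Fid values
  have hFid_min : Fid N Ω fδ fmin = 2⁻¹ * ENNReal.ofReal (∫ x, h x ^ 2 ∂μ) := by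
    rw [Fid, ← ofReal_integral_eq_lintegral_ofReal hsq
      (Eventually.of_forall fun x => sq_nonneg _)]
  have hFid_g : Fid N Ω fδ g = 2⁻¹ * ENNReal.ofReal ((∫ x, h x ^ 2 ∂μ) - c ^ 2 * V) := by
    rw [Fid, ← hexp]
    congr 1
    rw [show (∫⁻ x in Ω, ENNReal.ofReal ((g x - fδ x) ^ 2)) =
        ∫⁻ x, ENNReal.ofReal ((h x - c) ^ 2) ∂μ from
      lintegral_congr fun x => by rw [hgh x]]
    rw [← ofReal_integral_eq_lintegral_ofReal hsq'
      (Eventually.of_forall fun x => sq_nonneg _)]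
  have hFid_le : Fid N Ω fδ g ≤ Fid N Ω fδ fmin := by
    rw [hFid_min, hFid_g]
    gcongr
    have : 0 ≤ c ^ 2 * V := mul_nonneg (sq_nonneg _) hV.le
    linarith
  -- Rnp invariance under constant shift
  have hR : Rnp N Ω (φ n) p g = Rnp N Ω (φ n) p fmin := by
    refine lintegral_congr fun x => lintegral_congr fun y => ?_
    have : g x - g y = fmin x - fmin y := sub_sub_sub_cancel_right _ _ _
    rw [this]
  have hle : Fnp N Ω (φ n) p α fδ g ≤ Fnp N Ω (φ n) p α fδ fmin := by
    rw [Fnp, Fnp, hR]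
    exact add_le_add_left hFid_le _
  have hae : g =ᵐ[μ] fmin := huniq g hgL2 hle
  have hig : ∫ x, g x ∂μ = ∫ x, fmin x ∂μ := integral_congr_ae hae
  have hfminint : Integrable fmin μ := hfmin.integrable one_le_two
  have hig' : ∫ x, g x ∂μ = (∫ x, fmin x ∂μ) - c * V := by
    rw [hg, integral_sub hfminint (integrable_const c), integral_const, measureReal_def, hμuniv,
      smul_eq_mul, mul_comm]
  have hcV : c * V = 0 := by
    rw [hig'] at hig; linarith
  calc ∫ x in Ω, (fmin x - fδ x) = ∫ x, h x ∂μ := rfl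
    _ = c * V := hintc
    _ = 0 := hcV
end

section
/- Let Ω = (0,1), n ∈ ℕ, and consider the kernel φ_n^{(2)} := (n/4)·χ_{[−2/n, 2/n]}. Let a_1, …, a_n ∈ ℝ and f_n := Σ_{i=1}^n a_i χ_{[(i−1)/n, i/n]}. Then ∫_0^1 ∫_0^1 |f_n(x) − f_n(y)|/|x − y| · φ_n^{(2)}(x − y) dx dy = Σ_{i=2}^{n−1} ((1 − ln 2)/2) |a_{i+1} − a_{i−1}| + Σ_{i=2}^n (ln 2) |a_i − a_{i−1}|. -/
/-!
Substituting `x = u / n`, `y = v / n` turns the functional into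
`1/4 ∫₀ⁿ ∫₀ⁿ |g u - g v| * truncInvAbs (u - v)`, where `g` is the step function with value
`a (i + 1)` on `(i, i + 1)`. Splitting both integrals over the unit cells leaves
`∑ i j, |a (i + 1) - a (j + 1)| * cellInteraction (i - j)` with
`cellInteraction d = ∫₀¹ ∫₀¹ truncInvAbs (d + s - t)`; integrating first `w⁻¹` and then `log`
gives `2 ln 2` for `d = ±1`, `1 - ln 2` for `d = ±2` and `0` for `|d| ≥ 3`.
-/

open MeasureTheory Filter Topology
open scoped ENNReal

/-- The regularization functional on `Ω = (0,1)`: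
`R¹_φ(f) = ∫_0^1 ∫_0^1 |f x - f y| / |x - y| · φ(x - y) dx dy`. -/
noncomputable def R1d (φ f : ℝ → ℝ) : ℝ :=
  ∫ x in Set.Ioo (0 : ℝ) 1, ∫ y in Set.Ioo (0 : ℝ) 1, |f x - f y| / |x - y| * φ (x - y)

open Set Real intervalIntegral

noncomputable section

def truncInvAbs (w : ℝ) : ℝ := (Icc (-2 : ℝ) 2).indicator (fun w => |w|⁻¹) w

lemma truncInvAbs_neg (w : ℝ) : truncInvAbs (-w) = truncInvAbs w := by
  simp only [truncInvAbs, indicator, abs_neg, mem_Icc, neg_le]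
  grind

lemma measurable_truncInvAbs : Measurable truncInvAbs :=
  (measurable_abs.inv).indicator measurableSet_Icc

lemma intervalIntegrable_truncInvAbs {a b : ℝ} (h : (0 : ℝ) ∉ uIcc a b) :
    IntervalIntegrable truncInvAbs volume a b := by
  refine IntervalIntegrable.mono_fun' (g := fun w => |w|⁻¹) ?_
    measurable_truncInvAbs.aestronglyMeasurable (ae_of_all _ fun w => ?_)
  · exact (continuousOn_id.abs.inv₀ fun w hw =>
      abs_ne_zero.2 (ne_of_mem_of_not_mem hw h)).intervalIntegrable
  · simpa [truncInvAbs] using norm_indicator_le_norm_self (fun w : ℝ => |w|⁻¹) w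

lemma integral_truncInvAbs_of_le_two {a b : ℝ} (ha : 0 < a) (hab : a ≤ b) (hb : b ≤ 2) :
    ∫ w in a..b, truncInvAbs w = log b - log a := by
  rw [← log_div (by linarith) ha.ne', ← integral_inv_of_pos ha (by linarith)]
  refine integral_congr fun w hw => ?_
  rw [uIcc_of_le hab] at hw
  simp [truncInvAbs, abs_of_pos (ha.trans_le hw.1), indicator_of_mem
    (show w ∈ Icc (-2 : ℝ) 2 from ⟨by linarith [hw.1], hw.2.trans hb⟩)]

lemma integral_truncInvAbs_of_two_le {a b : ℝ} (ha : 2 ≤ a) (hab : a ≤ b) :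
    ∫ w in a..b, truncInvAbs w = 0 := by
  rw [integral_of_le hab, setIntegral_congr_fun measurableSet_Ioc (g := fun _ => 0), integral_zero]
  exact fun w hw => indicator_of_notMem (fun h => by linarith [h.2, hw.1]) _

lemma R1d_eq_rescaled (φ f : ℝ → ℝ) {c : ℝ} (hc : 0 < c) :
    R1d φ f = c⁻¹ * ∫ u in (0 : ℝ)..c, ∫ v in (0 : ℝ)..c,
      |f (u / c) - f (v / c)| / |u - v| * φ ((u - v) / c) := by
  have hIoo : ∀ F : ℝ → ℝ, ∫ x in Ioo (0 : ℝ) 1, F x = c⁻¹ * ∫ u in (0 : ℝ)..c, F (u / c) := by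
    intro F
    rw [integral_comp_div _ hc.ne', zero_div, div_self hc.ne', smul_eq_mul,
      inv_mul_cancel_left₀ hc.ne', integral_of_le zero_le_one, integral_Ioc_eq_integral_Ioo]
  have hdiff : ∀ u v, |f (u / c) - f (v / c)| / |u / c - v / c| * φ (u / c - v / c) =
      c * (|f (u / c) - f (v / c)| / |u - v| * φ ((u - v) / c)) := by
    intro u v
    rw [← sub_div, abs_div, abs_of_pos hc, div_div_eq_mul_div]
    ring
  simp only [R1d, hIoo, hdiff, intervalIntegral.integral_const_mul, inv_mul_cancel_left₀ hc.ne']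

lemma div_abs_mul_indicator_eq {c : ℝ} (hc : 0 < c) (A w : ℝ) :
    A / |w| * (Icc (-(2 / c)) (2 / c)).indicator (fun _ => c / 4) (w / c) =
      c / 4 * (A * truncInvAbs w) := by
  have hmem : w / c ∈ Icc (-(2 / c)) (2 / c) ↔ w ∈ Icc (-2) 2 := by
    rw [← neg_div, mem_Icc, mem_Icc, div_le_div_iff_of_pos_right hc,
      div_le_div_iff_of_pos_right hc]
  by_cases hw : w ∈ Icc (-2) 2
  · rw [indicator_of_mem (hmem.2 hw), truncInvAbs, indicator_of_mem hw]
    ring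
  · rw [indicator_of_notMem (mt hmem.1 hw), truncInvAbs, indicator_of_notMem hw]
    ring

lemma sum_indicator_Icc_div_eq {n : ℕ} (hn : 1 ≤ n) (a : ℕ → ℝ) {i : ℕ} (hi : i < n) {u : ℝ}
    (hu : u ∈ Ioo (i : ℝ) (i + 1)) :
    ∑ k ∈ Finset.Icc 1 n, a k * (Icc (((k : ℝ) - 1) / n) ((k : ℝ) / n)).indicator 1 (u / n) =
      a (i + 1) := by
  have hn0 : (0 : ℝ) < n := by exact_mod_cast hn
  have hmem : ∀ k : ℕ,
      u / n ∈ Icc (((k : ℝ) - 1) / n) ((k : ℝ) / n) ↔ u ∈ Icc ((k : ℝ) - 1) k := by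
    intro k
    rw [mem_Icc, mem_Icc, div_le_div_iff_of_pos_right hn0, div_le_div_iff_of_pos_right hn0]
  rw [Finset.sum_eq_single (i + 1)]
  · have hu' : u ∈ Icc (((i + 1 : ℕ) : ℝ) - 1) (i + 1 : ℕ) := by
      push_cast
      exact ⟨by linarith [hu.1], hu.2.le⟩
    rw [indicator_of_mem ((hmem _).2 hu'), Pi.one_apply, mul_one]
  · intro k _ hk
    rw [indicator_of_notMem, mul_zero]
    rw [hmem]
    intro h
    have h1 : k < i + 2 := by exact_mod_cast (show (k : ℝ) < i + 2 by linarith [h.1, hu.2])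
    have h2 : i < k := by exact_mod_cast hu.1.trans_le h.2
    omega
  · intro h
    exact absurd (Finset.mem_Icc.2 ⟨by omega, hi⟩) h

-- For `d = 0` the integrand is not integrable and the value is junk; it only ever appears
-- multiplied by `|b i - b i| = 0`.
def cellPotential (d : ℤ) (s : ℝ) : ℝ := ∫ t in (0 : ℝ)..1, truncInvAbs (d + s - t)

def cellInteraction (d : ℤ) : ℝ := ∫ s in (0 : ℝ)..1, cellPotential d s

lemma cellPotential_eq_integral (d : ℤ) (s : ℝ) :
    cellPotential d s = ∫ w in (d + s - 1)..(d + s), truncInvAbs w := by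
  rw [cellPotential, integral_comp_sub_left (fun w => truncInvAbs w), sub_zero]

lemma cellPotential_neg (d : ℤ) (s : ℝ) : cellPotential (-d) s = cellPotential d (1 - s) := by
  have h := integral_comp_sub_left (a := 0) (b := 1) (fun t => truncInvAbs (d + (1 - s) - t)) 1
  rw [sub_zero, sub_self] at h
  rw [cellPotential, cellPotential, ← h]
  congr 1 with t
  rw [← truncInvAbs_neg]
  push_cast
  ring_nf

lemma cellPotential_one {s : ℝ} (hs : s ∈ Ioc (0 : ℝ) 1) :
    cellPotential 1 s = log (1 + s) - log s := by
  rw [cellPotential_eq_integral, Int.cast_one, add_sub_cancel_left,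
    integral_truncInvAbs_of_le_two] <;> linarith [hs.1, hs.2]

lemma cellPotential_two {s : ℝ} (hs : s ∈ Icc (0 : ℝ) 1) :
    cellPotential 2 s = log 2 - log (1 + s) := by
  obtain ⟨hs0, hs1⟩ := hs
  have hint : ∀ a b : ℝ, 1 ≤ a → 1 ≤ b → IntervalIntegrable truncInvAbs volume a b :=
    fun a b ha hb => intervalIntegrable_truncInvAbs fun h => by
      rcases mem_uIcc.1 h with h | h <;> linarith [h.1]
  rw [cellPotential_eq_integral, show ((2 : ℤ) : ℝ) + s - 1 = 1 + s by push_cast; ring,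
    ← integral_add_adjacent_intervals (b := 2) (hint _ _ _ _) (hint _ _ _ _),
    integral_truncInvAbs_of_le_two, integral_truncInvAbs_of_two_le, add_zero] <;>
    push_cast <;> linarith

lemma cellPotential_of_three_le_abs {d : ℤ} (hd : 3 ≤ |d|) {s : ℝ} (hs : s ∈ Icc (0 : ℝ) 1) :
    cellPotential d s = 0 := by
  obtain ⟨hs0, hs1⟩ := hs
  rcases le_abs'.1 (show (3 : ℝ) ≤ |(d : ℝ)| by exact_mod_cast hd) with hd | hd
  · rw [← neg_neg d, cellPotential_neg, cellPotential_eq_integral,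
      integral_truncInvAbs_of_two_le] <;> push_cast <;> linarith
  · rw [cellPotential_eq_integral, integral_truncInvAbs_of_two_le] <;> linarith

lemma cellPotential_one_eqOn :
    EqOn (cellPotential 1) (fun s => log (1 + s) - log s) (uIoo 0 1) := fun s hs => by
  rw [uIoo_of_le zero_le_one] at hs
  exact cellPotential_one (Ioo_subset_Ioc_self hs)

lemma cellPotential_two_eqOn :
    EqOn (cellPotential 2) (fun s => log 2 - log (1 + s)) (uIoo 0 1) := fun s hs => by
  rw [uIoo_of_le zero_le_one] at hs
  exact cellPotential_two (Ioo_subset_Icc_self hs)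

lemma cellPotential_of_three_le_abs_eqOn {d : ℤ} (hd : 3 ≤ |d|) :
    EqOn (cellPotential d) 0 (uIoo 0 1) := fun s hs => by
  rw [uIoo_of_le zero_le_one] at hs
  exact cellPotential_of_three_le_abs hd (Ioo_subset_Icc_self hs)

lemma intervalIntegrable_log_one_add :
    IntervalIntegrable (fun s => log (1 + s)) volume 0 1 := by
  have h := (intervalIntegrable_log' (a := 1) (b := 2)).comp_add_left 1
  norm_num at h
  exact h

lemma integral_log_one_add : ∫ s in (0 : ℝ)..1, log (1 + s) = 2 * log 2 - 1 := by
  rw [integral_comp_add_left (fun s => log s), integral_log]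
  norm_num
  ring

lemma intervalIntegrable_cellPotential {d : ℤ} (hd : d ≠ 0) :
    IntervalIntegrable (cellPotential d) volume 0 1 := by
  wlog hpos : 0 < d generalizing d
  · have h := (this (neg_ne_zero.2 hd) (by omega)).comp_sub_left 1
    simp only [sub_zero, sub_self, ← cellPotential_neg, neg_neg] at h
    exact h.symm
  rcases (by omega : d = 1 ∨ d = 2 ∨ 3 ≤ d) with rfl | rfl | hd3
  · exact (intervalIntegrable_congr_uIoo cellPotential_one_eqOn).2
      (intervalIntegrable_log_one_add.sub intervalIntegrable_log')
  · exact (intervalIntegrable_congr_uIoo cellPotential_two_eqOn).2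
      (intervalIntegrable_const.sub intervalIntegrable_log_one_add)
  · exact (intervalIntegrable_congr_uIoo
      (cellPotential_of_three_le_abs_eqOn (by rwa [abs_of_pos hpos]))).2 intervalIntegrable_const

lemma cellInteraction_neg (d : ℤ) : cellInteraction (-d) = cellInteraction d := by
  simp only [cellInteraction, cellPotential_neg]
  rw [integral_comp_sub_left (fun s => cellPotential d s), sub_zero, sub_self]

lemma cellInteraction_one : cellInteraction 1 = 2 * log 2 := by
  rw [cellInteraction, integral_congr_uIoo cellPotential_one_eqOn,
    integral_sub intervalIntegrable_log_one_add intervalIntegrable_log', integral_log_one_add,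
    integral_log]
  simp

lemma cellInteraction_two : cellInteraction 2 = 1 - log 2 := by
  rw [cellInteraction, integral_congr_uIoo cellPotential_two_eqOn,
    integral_sub intervalIntegrable_const intervalIntegrable_log_one_add, integral_log_one_add]
  simp
  ring

lemma cellInteraction_of_three_le_abs {d : ℤ} (hd : 3 ≤ |d|) : cellInteraction d = 0 := by
  rw [cellInteraction, integral_congr_uIoo (cellPotential_of_three_le_abs_eqOn hd)]
  simp

lemma cellInteraction_eq {d : ℤ} (hd : d ≠ 0) : cellInteraction d =
    if d = 1 ∨ d = -1 then 2 * log 2 else if d = 2 ∨ d = -2 then 1 - log 2 else 0 := by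
  rcases (by omega : d = 1 ∨ d = -1 ∨ d = 2 ∨ d = -2 ∨ d ≤ -3 ∨ 3 ≤ d) with
    rfl | rfl | rfl | rfl | hd3 | hd3
  · simp [cellInteraction_one]
  · simp [cellInteraction_neg, cellInteraction_one]
  · simp [cellInteraction_two]
  · simp [cellInteraction_neg, cellInteraction_two]
  all_goals rw [cellInteraction_of_three_le_abs (le_abs'.2 (by omega)), if_neg, if_neg] <;> omega

lemma intervalIntegrable_truncInvAbs_sub {u a b : ℝ} (hab : a ≤ b) (hu : u ∉ Icc a b) :
    IntervalIntegrable (fun v => truncInvAbs (u - v)) volume a b := by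
  have h : (0 : ℝ) ∉ uIcc (u - a) (u - b) := by
    rw [uIcc_of_ge (by linarith)]
    exact fun h => hu ⟨by linarith [h.2], by linarith [h.1]⟩
  simpa using (intervalIntegrable_truncInvAbs h).comp_sub_left u

lemma integral_truncInvAbs_sub_cell (i j : ℕ) (u : ℝ) :
    ∫ v in (j : ℝ)..j + 1, truncInvAbs (u - v) = cellPotential (i - j) (u - i) := by
  have h := integral_comp_add_right (a := 0) (b := 1) (fun v => truncInvAbs (u - v)) (j : ℝ)
  rw [zero_add, add_comm 1] at h
  rw [← h, cellPotential]
  congr 1 with t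
  push_cast
  ring_nf

lemma integral_eq_sum_cells {E : Type*} [NormedAddCommGroup E] [NormedSpace ℝ E] {F : ℝ → E}
    (n : ℕ)
    (hF : ∀ k < n, IntervalIntegrable F volume k (k + 1)) :
    ∫ x in (0 : ℝ)..n, F x = ∑ k ∈ Finset.range n, ∫ x in (k : ℝ)..k + 1, F x := by
  simpa using (sum_integral_adjacent_intervals (a := ((↑) : ℕ → ℝ)) (by simpa using hF)).symm

section StepFunction

variable {g : ℝ → ℝ} {b : ℕ → ℝ} {n : ℕ}

lemma integral_abs_sub_mul_truncInvAbs_eq_sum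
    (hg : ∀ k < n, ∀ u ∈ Ioo (k : ℝ) (k + 1), g u = b k) {i : ℕ} (hi : i < n) {u : ℝ}
    (hu : u ∈ Ioo (i : ℝ) (i + 1)) :
    ∫ v in (0 : ℝ)..n, |g u - g v| * truncInvAbs (u - v) =
      ∑ j ∈ Finset.range n, |b i - b j| * cellPotential (i - j) (u - i) := by
  have hcell : ∀ j < n, EqOn (fun v => |g u - g v| * truncInvAbs (u - v))
      (fun v => |b i - b j| * truncInvAbs (u - v)) (uIoo j (j + 1)) := fun j hj v hv => by
    rw [uIoo_of_le (by linarith)] at hv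
    simp only [hg i hi u hu, hg j hj v hv]
  have hint : ∀ j : ℕ,
      IntervalIntegrable (fun v => |b i - b j| * truncInvAbs (u - v)) volume j (j + 1) := by
    intro j
    rcases eq_or_ne i j with rfl | hij
    · simp
    refine (intervalIntegrable_truncInvAbs_sub (by linarith) fun h => hij ?_).const_mul _
    have h1 : i < j + 1 := by exact_mod_cast hu.1.trans_le h.2
    have h2 : j < i + 1 := by exact_mod_cast h.1.trans_lt hu.2
    omega
  rw [integral_eq_sum_cells n fun j hj => (intervalIntegrable_congr_uIoo (hcell j hj)).2 (hint j)]
  refine Finset.sum_congr rfl fun j hj => ?_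
  rw [integral_congr_uIoo (hcell j (Finset.mem_range.1 hj)), intervalIntegral.integral_const_mul,
    integral_truncInvAbs_sub_cell]

lemma integral_integral_abs_sub_mul_truncInvAbs_eq_sum
    (hg : ∀ k < n, ∀ u ∈ Ioo (k : ℝ) (k + 1), g u = b k) :
    ∫ u in (0 : ℝ)..n, ∫ v in (0 : ℝ)..n, |g u - g v| * truncInvAbs (u - v) =
      ∑ i ∈ Finset.range n, ∑ j ∈ Finset.range n, |b i - b j| * cellInteraction (i - j) := by
  have hcell : ∀ i < n, EqOn (fun u => ∫ v in (0 : ℝ)..n, |g u - g v| * truncInvAbs (u - v))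
      (fun u => ∑ j ∈ Finset.range n, |b i - b j| * cellPotential (i - j) (u - i))
      (uIoo i (i + 1)) := fun i hi u hu => by
    rw [uIoo_of_le (by linarith)] at hu
    exact integral_abs_sub_mul_truncInvAbs_eq_sum hg hi hu
  have hint : ∀ i j : ℕ, IntervalIntegrable
      (fun u => |b i - b j| * cellPotential (i - j) (u - i)) volume i (i + 1) := by
    intro i j
    rcases eq_or_ne i j with rfl | hij
    · simp
    have h := (intervalIntegrable_cellPotential
      (sub_ne_zero.2 (Nat.cast_injective.ne hij))).comp_sub_right i
    rw [zero_add, add_comm 1] at h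
    exact h.const_mul _
  rw [integral_eq_sum_cells n fun i hi => (intervalIntegrable_congr_uIoo (hcell i hi)).2
    (by simpa only [← Finset.sum_fn] using
      IntervalIntegrable.sum (Finset.range n) fun j _ => hint i j)]
  refine Finset.sum_congr rfl fun i hi => ?_
  rw [integral_congr_uIoo (hcell i (Finset.mem_range.1 hi)),
    intervalIntegral.integral_finsetSum fun j _ => hint i j]
  refine Finset.sum_congr rfl fun j _ => ?_
  rw [intervalIntegral.integral_const_mul, integral_comp_sub_right (fun s => cellPotential _ s),
    sub_self, add_sub_cancel_left, cellInteraction]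

end StepFunction

lemma sum_range_sum_range_ite_eq_add {M : Type*} [AddCommMonoid M] (n d : ℕ) (T : ℕ → ℕ → M) :
    ∑ i ∈ Finset.range n, ∑ j ∈ Finset.range n, (if j = i + d then T i j else 0) =
      ∑ i ∈ Finset.range (n - d), T i (i + d) := by
  simp only [Finset.sum_ite_eq', ← Finset.sum_filter]
  congr 1
  ext i
  simp only [Finset.mem_filter, Finset.mem_range]
  omega

lemma sum_sum_abs_sub_mul_cellInteraction (b : ℕ → ℝ) (n : ℕ) :
    ∑ i ∈ Finset.range n, ∑ j ∈ Finset.range n, |b i - b j| * cellInteraction (i - j) =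
      4 * log 2 * ∑ i ∈ Finset.range (n - 1), |b (i + 1) - b i| +
        2 * (1 - log 2) * ∑ i ∈ Finset.range (n - 2), |b (i + 2) - b i| := by
  have h : ∀ i j : ℕ, |b i - b j| * cellInteraction (i - j) =
      ((if j = i + 1 then 2 * log 2 * |b j - b i| else 0) +
        (if i = j + 1 then 2 * log 2 * |b i - b j| else 0)) +
      ((if j = i + 2 then (1 - log 2) * |b j - b i| else 0) +
        (if i = j + 2 then (1 - log 2) * |b i - b j| else 0)) := by
    intro i j
    rcases eq_or_ne i j with rfl | hij
    · simp
    rw [cellInteraction_eq (by omega)]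
    split_ifs <;> first | omega | ring1 | (rw [abs_sub_comm]; ring1)
  simp only [h, Finset.sum_add_distrib]
  rw [Finset.sum_comm (f := fun i j => if i = j + 1 then _ else _),
    Finset.sum_comm (f := fun i j => if i = j + 2 then _ else _)]
  simp only [sum_range_sum_range_ite_eq_add, ← Finset.mul_sum]
  ring

lemma sum_Icc_two_eq_sum_range {M : Type*} [AddCommMonoid M] (F : ℕ → M) (m : ℕ) :
    ∑ i ∈ Finset.Icc 2 m, F i = ∑ i ∈ Finset.range (m - 1), F (i + 2) := by
  rw [← Finset.Ico_add_one_right_eq_Icc, Finset.sum_Ico_eq_sum_range]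
  simp only [show m + 1 - 2 = m - 1 by omega, add_comm 2]

end

theorem stmt_17 (n : ℕ) (hn : 1 ≤ n) (a : ℕ → ℝ)
    (φn2 : ℝ → ℝ)
    (hφn2 : φn2 = Set.indicator (Set.Icc (-(2 / (n : ℝ))) (2 / (n : ℝ)))
      (fun _ => (n : ℝ) / 4))
    (f : ℝ → ℝ)
    (hf : f = fun x => ∑ i ∈ Finset.Icc 1 n,
      a i * Set.indicator (Set.Icc (((i : ℝ) - 1) / n) ((i : ℝ) / n)) 1 x) :
    R1d φn2 f =
      (∑ i ∈ Finset.Icc 2 (n - 1), (1 - Real.log 2) / 2 * |a (i + 1) - a (i - 1)|) +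
      ∑ i ∈ Finset.Icc 2 n, Real.log 2 * |a i - a (i - 1)| := by
  subst hφn2 hf
  have hn0 : (0 : ℝ) < n := by exact_mod_cast hn
  rw [R1d_eq_rescaled _ _ hn0]
  simp only [div_abs_mul_indicator_eq hn0, intervalIntegral.integral_const_mul]
  rw [integral_integral_abs_sub_mul_truncInvAbs_eq_sum (b := fun i => a (i + 1))
      fun k hk u hu => sum_indicator_Icc_div_eq hn a hk hu,
    sum_sum_abs_sub_mul_cellInteraction, sum_Icc_two_eq_sum_range, sum_Icc_two_eq_sum_range,
    Nat.sub_sub]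
  simp only [← Finset.mul_sum, Nat.reduceSubDiff]
  field_simp
  ring
end

section
/- Let Ω = (0,1), n ≥ 2, φ_n := (n/2)·χ_{[−1/n, 1/n]}, a_0, …, a_n ∈ ℝ, and let f_n := Σ_{i=0}^n a_i g_i be the piecewise linear spline with nodes (k/n, a_k), where g_i(x) := max(1 − n|x − i/n|, 0). Then R_n^1(f_n) = Σ_{i=1}^n |a_i − a_{i−1}|/2 + Σ_{i=1}^{n−1} t(a_{i−1}, a_i, a_{i+1}), where t(a_{i−1}, a_i, a_{i+1}) = |a_{i+1} − a_{i−1}|/4 if sgn(a_{i−1} − a_i) = sgn(a_i − a_{i+1}), and t(a_{i−1}, a_i, a_{i+1}) = ((a_i − a_{i−1})² + (a_i − a_{i+1})²) / (4(|a_i − a_{i−1}| + |a_i − a_{i+1}|)) if sgn(a_{i−1} − a_i) ≠ sgn(a_i − a_{i+1}). -/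
open MeasureTheory Filter Topology
open scoped ENNReal

/-!
Substituting `y = x + h`, Fubini and the evenness of `φ` give
`R¹_φ(f) = 2 ∫_0^1 φ(h)/h ∫_0^{1-h} |f(x+h) - f(x)| dx dh`.
For the spline and `0 < h ≤ 1/n`, the inner integral splits into the pieces
`[k/n, (k+1)/n - h]`, on which `f(x+h) - f(x) = h s_k` with `s_k = n (a_{k+1} - a_k)` the slope
of the `k`-th cell, and the windows `[k/n - h, k/n]` around the interior nodes, on which
`f(x+h) - f(x)` interpolates linearly between `h s_{k-1}` and `h s_k`. Hence the inner integral is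
`h (1/n - h) Σ |s_k| + h² Σ ∫_0^1 |s_{k-1} (1-t) + s_k t| dt`. The last integral follows from the
antiderivative `u |u| / 2` of `|u|`: it is `|α + β| / 2` for slopes `α, β` of the same sign and
`(α² + β²) / (2 (|α| + |β|))` otherwise. Integrating the resulting affine function of `h` over
`(0, 1/n]` gives the formula.
-/

open Set

theorem integral_abs_zero_left (b : ℝ) : ∫ x in (0 : ℝ)..b, |x| = b * |b| / 2 := by
  rcases le_total 0 b with hb | hb
  · rw [intervalIntegral.integral_congr fun x hx => abs_of_nonneg (uIcc_of_le hb ▸ hx).1,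
      integral_id, abs_of_nonneg hb]
    ring
  · rw [intervalIntegral.integral_congr fun x hx => abs_of_nonpos (uIcc_of_ge hb ▸ hx).2,
      intervalIntegral.integral_neg, integral_id, abs_of_nonpos hb]
    ring

theorem integral_abs (a b : ℝ) : ∫ x in a..b, |x| = (b * |b| - a * |a|) / 2 := by
  rw [← intervalIntegral.integral_interval_sub_left (continuous_abs.intervalIntegrable _ _)
    (continuous_abs.intervalIntegrable _ _), integral_abs_zero_left, integral_abs_zero_left]
  ring

theorem same_side_of_sign_eq {α β : ℝ} (h : Real.sign α = Real.sign β) :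
    0 ≤ α ∧ 0 ≤ β ∨ α ≤ 0 ∧ β ≤ 0 := by
  unfold Real.sign at h
  split_ifs at h <;> norm_num at h <;>
    first
    | exact Or.inl ⟨by linarith, by linarith⟩
    | exact Or.inr ⟨by linarith, by linarith⟩

theorem opposite_sides_of_sign_ne {α β : ℝ} (h : Real.sign α ≠ Real.sign β) :
    α ≤ 0 ∧ 0 ≤ β ∨ 0 ≤ α ∧ β ≤ 0 := by
  unfold Real.sign at h
  split_ifs at h <;> norm_num at h <;>
    first
    | exact Or.inl ⟨by linarith, by linarith⟩
    | exact Or.inr ⟨by linarith, by linarith⟩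

theorem integral_abs_interpolate (α β : ℝ) :
    ∫ t in (0 : ℝ)..1, |α * (1 - t) + β * t| =
      if Real.sign α = Real.sign β then |α + β| / 2
      else (α ^ 2 + β ^ 2) / (2 * (|α| + |β|)) := by
  rcases eq_or_ne α β with rfl | hne
  · simp [← mul_add, ← two_mul, abs_mul]
  have hsub : β - α ≠ 0 := sub_ne_zero.2 hne.symm
  have key : ∫ t in (0 : ℝ)..1, |α * (1 - t) + β * t| = (β * |β| - α * |α|) / (2 * (β - α)) := by
    have := intervalIntegral.integral_comp_mul_add (fun u => |u|) hsub α (a := 0) (b := 1)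
    simp only [mul_zero, zero_add, mul_one, sub_add_cancel, integral_abs, smul_eq_mul] at this
    rw [show (fun t => |α * (1 - t) + β * t|) = fun t => |(β - α) * t + α| by ext; ring_nf, this]
    field_simp
  rw [key]
  split_ifs with hs
  · rcases same_side_of_sign_eq hs with ⟨ha, hb⟩ | ⟨ha, hb⟩
    · rw [abs_of_nonneg ha, abs_of_nonneg hb, abs_of_nonneg (add_nonneg ha hb)]
      field_simp
      ring
    · rw [abs_of_nonpos ha, abs_of_nonpos hb, abs_of_nonpos (add_nonpos ha hb)]
      field_simp
      ring
  · rcases opposite_sides_of_sign_ne hs with ⟨ha, hb⟩ | ⟨ha, hb⟩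
    · rw [abs_of_nonpos ha, abs_of_nonneg hb, neg_add_eq_sub]
      field_simp
      ring
    · rw [abs_of_nonneg ha, abs_of_nonpos hb, ← sub_eq_add_neg]
      have : α - β ≠ 0 := sub_ne_zero.2 hne
      field_simp
      ring

theorem integral_sub_mul_add_mul (δ A B : ℝ) :
    ∫ h in (0 : ℝ)..δ, ((δ - h) * A + h * B) = δ ^ 2 / 2 * (A + B) := by
  have e : (fun h : ℝ => (δ - h) * A + h * B) = fun h => δ * A + (B - A) * h := by ext; ring
  rw [e, intervalIntegral.integral_add intervalIntegrable_const
    (intervalIntegral.intervalIntegrable_id.const_mul _), intervalIntegral.integral_const,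
    intervalIntegral.integral_const_mul, integral_id, smul_eq_mul]
  ring

theorem half_integral_abs_interpolate_sub (u v w : ℝ) :
    (∫ t in (0 : ℝ)..1, |(v - u) * (1 - t) + (w - v) * t|) / 2 =
      if Real.sign (u - v) = Real.sign (v - w) then |w - u| / 4
      else ((v - u) ^ 2 + (v - w) ^ 2) / (4 * (|v - u| + |v - w|)) := by
  simp only [integral_abs_interpolate, ← neg_sub v u, ← neg_sub w v, Real.sign_neg, neg_inj,
    neg_sq, abs_neg, sub_add_sub_cancel']
  split_ifs <;> rw [div_div] <;> ring

section ShiftKernel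

variable {φ f : ℝ → ℝ}

/-- The integrand of `R1d φ f` in the coordinates `(x, h) = (x, y - x)`, extended by zero off the
unit square; it agrees with that integrand when `φ` is even. -/
noncomputable def shiftKernel (φ f : ℝ → ℝ) (x h : ℝ) : ℝ :=
  (Ioo 0 1).indicator 1 x * (Ioo 0 1).indicator 1 (x + h) * (|f (x + h) - f x| / |h| * φ h)

theorem R1d_eq_integral_integral_shiftKernel (hφ : ∀ u, φ (-u) = φ u) :
    R1d φ f = ∫ x, ∫ h, shiftKernel φ f x h := by
  have hzero : ∀ x ∉ Ioo (0 : ℝ) 1, ∫ h, shiftKernel φ f x h = 0 := fun x hx => by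
    simp [shiftKernel, hx]
  rw [R1d, ← setIntegral_eq_integral_of_forall_compl_eq_zero hzero]
  refine setIntegral_congr_fun measurableSet_Ioo fun x hx => ?_
  rw [← integral_indicator measurableSet_Ioo, ← integral_add_left_eq_self _ x]
  congr with h
  simp [shiftKernel, hx, indicator_apply, abs_sub_comm, hφ]

theorem integral_shiftKernel_neg (hφ : ∀ u, φ (-u) = φ u) (h : ℝ) :
    ∫ x, shiftKernel φ f x (-h) = ∫ x, shiftKernel φ f x h := by
  rw [← integral_add_right_eq_self _ h]
  congr with x
  simp only [shiftKernel, add_neg_cancel_right, hφ, abs_neg, abs_sub_comm (f x)]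
  ring

theorem integral_shiftKernel_of_pos {h : ℝ} (hh : 0 < h) :
    ∫ x, shiftKernel φ f x h = φ h / h * ∫ x in Ioo 0 (1 - h), |f (x + h) - f x| := by
  rw [← integral_const_mul, ← integral_indicator measurableSet_Ioo]
  congr with x
  simp only [shiftKernel, indicator_apply, mem_Ioo, Pi.one_apply, abs_of_pos hh]
  split_ifs <;> grind

theorem measurable_shiftKernel (hf : Continuous f) (hφ : Measurable φ) :
    Measurable (Function.uncurry (shiftKernel φ f)) := by
  unfold shiftKernel
  fun_prop (disch := measurability)

theorem abs_shiftKernel_le {K : NNReal} {M : ℝ} (hf : LipschitzWith K f) (hφM : ∀ u, |φ u| ≤ M)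
    (x h : ℝ) :
    |shiftKernel φ f x h| ≤
      (Ioo 0 1).indicator 1 x * (Ioo (-1) 1).indicator (fun _ => K * M) h := by
  have hM : 0 ≤ M := (abs_nonneg _).trans (hφM 0)
  by_cases hxh : x ∈ Ioo 0 1 ∧ x + h ∈ Ioo 0 1
  · obtain ⟨hx, hxh⟩ := hxh
    have hh : h ∈ Ioo (-1) 1 := ⟨by linarith [hx.2, hxh.1], by linarith [hx.1, hxh.2]⟩
    have hquot : |f (x + h) - f x| / |h| ≤ K := div_le_of_le_mul₀ (abs_nonneg _) K.2
      (by simpa [Real.dist_eq] using hf.dist_le_mul (x + h) x)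
    simp only [shiftKernel, indicator_of_mem hx, indicator_of_mem hxh, indicator_of_mem hh,
      Pi.one_apply, one_mul, abs_mul, abs_div, abs_abs]
    exact mul_le_mul hquot (hφM h) (abs_nonneg _) K.2
  · have : shiftKernel φ f x h = 0 := by
      rw [not_and_or] at hxh
      rcases hxh with hout | hout <;> simp [shiftKernel, hout]
    rw [this, abs_zero]
    exact mul_nonneg (indicator_nonneg (by simp) _) (indicator_nonneg (fun _ _ => by positivity) _)

theorem integrable_shiftKernel {K : NNReal} {M : ℝ} (hf : LipschitzWith K f) (hφm : Measurable φ)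
    (hφM : ∀ u, |φ u| ≤ M) :
    Integrable (Function.uncurry (shiftKernel φ f)) (volume.prod volume) := by
  refine Integrable.mono' ?_ (measurable_shiftKernel hf.continuous hφm).aestronglyMeasurable
    (ae_of_all _ fun p => abs_shiftKernel_le hf hφM p.1 p.2)
  exact Integrable.mul_prod ((integrableOn_const (by simp)).integrable_indicator measurableSet_Ioo)
    ((integrableOn_const (by simp)).integrable_indicator measurableSet_Ioo)

theorem R1d_eq_two_mul_integral_Ioi {K : NNReal} {M : ℝ} (hf : LipschitzWith K f)
    (hφm : Measurable φ) (hφM : ∀ u, |φ u| ≤ M) (hφ : ∀ u, φ (-u) = φ u) :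
    R1d φ f = 2 * ∫ h in Ioi 0, φ h / h * ∫ x in Ioo 0 (1 - h), |f (x + h) - f x| := by
  set W : ℝ → ℝ := fun h => ∫ x, shiftKernel φ f x h
  have hW : ∀ h, W |h| = W h := fun h => by
    rcases abs_choice h with hh | hh <;> simp only [W, hh, integral_shiftKernel_neg hφ]
  calc R1d φ f = ∫ h, W h := by
        rw [R1d_eq_integral_integral_shiftKernel hφ,
          integral_integral_swap (integrable_shiftKernel hf hφm hφM)]
    _ = ∫ h, W |h| := by simp only [hW]
    _ = 2 * ∫ h in Ioi 0, W h := integral_comp_abs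
    _ = _ := by
      congr 1
      exact setIntegral_congr_fun measurableSet_Ioi fun h hh => integral_shiftKernel_of_pos hh

end ShiftKernel

theorem R1d_indicator_Icc {f : ℝ → ℝ} {K : NNReal} {δ c : ℝ} (hf : LipschitzWith K f)
    (hδ : 0 ≤ δ) (hδ1 : δ ≤ 1) :
    R1d ((Icc (-δ) δ).indicator fun _ => c) f =
      2 * c * ∫ h in (0 : ℝ)..δ, (∫ x in (0 : ℝ)..(1 - h), |f (x + h) - f x|) / h := by
  set φ : ℝ → ℝ := (Icc (-δ) δ).indicator fun _ => c
  have hφm : Measurable φ := measurable_const.indicator measurableSet_Icc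
  have hφM : ∀ u, |φ u| ≤ |c| := fun u => by
    by_cases hu : u ∈ Icc (-δ) δ <;> simp [φ, hu]
  have hφ : ∀ u, φ (-u) = φ u := fun u => by
    simp only [φ, indicator_apply, mem_Icc, neg_le_neg_iff, neg_le, and_comm]
  rw [R1d_eq_two_mul_integral_Ioi hf hφm hφM hφ, mul_assoc]
  congr 1
  rw [intervalIntegral.integral_of_le hδ, ← integral_const_mul,
    setIntegral_eq_of_subset_of_forall_sdiff_eq_zero measurableSet_Ioi
      (Ioc_subset_Ioi_self : Ioc 0 δ ⊆ Ioi 0)]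
  · refine setIntegral_congr_fun measurableSet_Ioc fun h hh => ?_
    have hmem : h ∈ Icc (-δ) δ := ⟨by linarith [hh.1], hh.2⟩
    have hφh : φ h = c := indicator_of_mem hmem _
    rw [hφh, intervalIntegral.integral_of_le (by linarith [hh.2]),
      integral_Ioc_eq_integral_Ioo]
    ring
  · intro h hh
    have hφh : φ h = 0 := indicator_of_notMem (fun hm : h ∈ Icc (-δ) δ => hh.2 ⟨hh.1, hm.2⟩) _
    rw [hφh, zero_div, zero_mul]

theorem integral_eq_sum_integral_split_adjacent {F : ℝ → ℝ} (hF : Continuous F) (b : ℕ → ℝ)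
    (h : ℝ) (m : ℕ) :
    ∫ x in b 0..(b (m + 1) - h), F x =
      (∑ k ∈ Finset.range (m + 1), ∫ x in b k..(b (k + 1) - h), F x) +
        ∑ k ∈ Finset.range m, ∫ x in (b (k + 1) - h)..b (k + 1), F x := by
  induction m with
  | zero => simp
  | succ m ih =>
    rw [← intervalIntegral.integral_add_adjacent_intervals (b := b (m + 1) - h)
        (hF.intervalIntegrable _ _) (hF.intervalIntegrable _ _),
      ← intervalIntegral.integral_add_adjacent_intervals (a := b (m + 1) - h) (b := b (m + 1))
        (hF.intervalIntegrable _ _) (hF.intervalIntegrable _ _),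
      ih]
    simp only [Finset.sum_range_succ]
    ring

noncomputable def hat (n i : ℕ) (x : ℝ) : ℝ := max (1 - n * |x - i / n|) 0

noncomputable def spline (n : ℕ) (a : ℕ → ℝ) (x : ℝ) : ℝ :=
  ∑ i ∈ Finset.range (n + 1), a i * hat n i x

theorem lipschitzWith_hat (n i : ℕ) : LipschitzWith n (hat n i) :=
  LipschitzWith.of_dist_le_mul fun x y => by
    simp only [hat, Real.dist_eq, NNReal.coe_natCast]
    calc _ ≤ |(1 - n * |x - i / n|) - (1 - n * |y - i / n|)| := abs_max_sub_max_le_abs _ _ _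
      _ = n * |(|y - i / n| - |x - i / n|)| := by
        rw [show 1 - n * |x - i / n| - (1 - n * |y - i / n|) = n * (|y - i / n| - |x - i / n|) by
          ring, abs_mul, Nat.abs_cast]
      _ ≤ n * |x - y| := by
        refine mul_le_mul_of_nonneg_left ?_ n.cast_nonneg
        calc _ ≤ |y - i / n - (x - i / n)| := abs_abs_sub_abs_le_abs_sub _ _
          _ = |x - y| := by rw [sub_sub_sub_cancel_right, abs_sub_comm]

theorem lipschitzWith_spline (n : ℕ) (a : ℕ → ℝ) :
    LipschitzWith (∑ i ∈ Finset.range (n + 1), ‖a i‖₊ * n) (spline n a) := by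
  refine LipschitzWith.of_dist_le_mul fun x y => ?_
  push_cast
  rw [Finset.sum_mul]
  refine (dist_sum_sum_le _ _ _).trans (Finset.sum_le_sum fun i _ => ?_)
  rw [← smul_eq_mul, ← smul_eq_mul, dist_smul₀, mul_assoc]
  exact mul_le_mul_of_nonneg_left ((lipschitzWith_hat n i).dist_le_mul x y) (norm_nonneg _)

section ShiftOfPiecewiseAffine

variable {f : ℝ → ℝ} {p q h c s c₁ c₂ s₁ s₂ : ℝ}

theorem integral_abs_shift_of_affine (hh : 0 ≤ h) (hpq : p + h ≤ q)
    (hf : ∀ x ∈ Icc p q, f x = c + s * x) :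
    ∫ x in p..(q - h), |f (x + h) - f x| = |s| * h * (q - p - h) := by
  have hconst : ∀ x ∈ uIcc p (q - h), |f (x + h) - f x| = |s| * h := fun x hx => by
    rw [uIcc_of_le (by linarith)] at hx
    rw [hf x ⟨hx.1, by linarith [hx.2]⟩, hf (x + h) ⟨by linarith [hx.1], by linarith [hx.2]⟩,
      show c + s * (x + h) - (c + s * x) = s * h by ring, abs_mul, abs_of_nonneg hh]
  rw [intervalIntegral.integral_congr hconst, intervalIntegral.integral_const, smul_eq_mul]
  ring

theorem integral_abs_shift_of_kink (hh : 0 < h) (h₁ : ∀ x ∈ Icc (p - h) p, f x = c₁ + s₁ * x)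
    (h₂ : ∀ x ∈ Icc p (p + h), f x = c₂ + s₂ * x) :
    ∫ x in (p - h)..p, |f (x + h) - f x| = h ^ 2 * ∫ t in (0 : ℝ)..1, |s₁ * (1 - t) + s₂ * t| := by
  have hp : c₁ + s₁ * p = c₂ + s₂ * p := by
    rw [← h₁ p ⟨by linarith, le_rfl⟩, ← h₂ p ⟨le_rfl, by linarith⟩]
  have hlin : ∀ t ∈ uIcc (0 : ℝ) 1,
      |f (h * t + (p - h) + h) - f (h * t + (p - h))| = h * |s₁ * (1 - t) + s₂ * t| := by
    intro t ht
    rw [uIcc_of_le zero_le_one] at ht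
    have ht₀ : 0 ≤ h * t := mul_nonneg hh.le ht.1
    have ht₁ : h * t ≤ h := mul_le_of_le_one_right hh.le ht.2
    rw [h₂ _ ⟨by linarith, by linarith⟩, h₁ _ ⟨by linarith, by linarith⟩,
      show c₂ + s₂ * (h * t + (p - h) + h) - (c₁ + s₁ * (h * t + (p - h))) =
        h * (s₁ * (1 - t) + s₂ * t) by linear_combination hp.symm, abs_mul, abs_of_pos hh]
  have hsub := intervalIntegral.integral_comp_mul_add (fun x => |f (x + h) - f x|) hh.ne' (p - h)
    (a := 0) (b := 1)
  rw [mul_zero, zero_add, mul_one, add_sub_cancel, intervalIntegral.integral_congr hlin,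
    intervalIntegral.integral_const_mul, smul_eq_mul] at hsub
  rw [eq_inv_mul_iff_mul_eq₀ hh.ne'] at hsub
  rw [← hsub]
  ring

end ShiftOfPiecewiseAffine

section Spline

variable {n k : ℕ} {a : ℕ → ℝ} {x : ℝ}

theorem hat_eq (hn : 0 < n) (i : ℕ) (x : ℝ) : hat n i x = max (1 - |n * x - i|) 0 := by
  have hn' : (n : ℝ) ≠ 0 := by positivity
  rw [hat, show (n : ℝ) * x - i = n * (x - i / n) by field_simp, abs_mul, Nat.abs_cast]

theorem spline_eq_of_mem_Icc (hk : k < n) (hx : x ∈ Icc (k / n : ℝ) ((k + 1) / n)) :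
    spline n a x = a k + (a (k + 1) - a k) * (n * x - k) := by
  have hn : (0 : ℝ) < n := by exact_mod_cast (Nat.zero_lt_of_lt hk)
  have hlo : (k : ℝ) ≤ n * x := by rw [← div_le_iff₀' hn]; exact hx.1
  have hhi : n * x ≤ k + 1 := by rw [← le_div_iff₀' hn]; exact hx.2
  rw [spline, Finset.sum_eq_add_of_mem k (k + 1) (by simp; omega) (by simp; omega) (by omega)]
  · rw [hat_eq (by omega), hat_eq (by omega), abs_of_nonneg (by linarith),
      abs_of_nonpos (by push_cast; linarith), max_eq_left (by linarith),
      max_eq_left (by push_cast; linarith)]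
    push_cast
    ring
  · intro i _ hi
    have hfar : 1 ≤ |n * x - i| := by
      rcases lt_or_gt_of_ne hi.1 with hlt | hgt
      · have : (i : ℝ) + 1 ≤ k := by exact_mod_cast hlt
        rw [abs_of_nonneg (by linarith)]; linarith
      · have : (k : ℝ) + 2 ≤ i := by exact_mod_cast (by omega : k + 2 ≤ i)
        rw [abs_of_nonpos (by linarith)]; linarith
    rw [hat_eq (by omega), max_eq_right (by linarith), mul_zero]

theorem integral_abs_shift_spline {h : ℝ} (hn : 0 < n) (hh : 0 < h) (hhn : h ≤ 1 / n) :
    ∫ x in (0 : ℝ)..(1 - h), |spline n a (x + h) - spline n a x| =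
      n * h * ((1 / n - h) * ∑ k ∈ Finset.range n, |a (k + 1) - a k| +
        h * ∑ k ∈ Finset.range (n - 1),
          ∫ t in (0 : ℝ)..1, |(a (k + 1) - a k) * (1 - t) + (a (k + 2) - a (k + 1)) * t|) := by
  have hn' : (0 : ℝ) < n := by exact_mod_cast hn
  set b : ℕ → ℝ := fun k => k / n
  have hstep : ∀ k : ℕ, b (k + 1) = b k + 1 / n := fun k => by simp only [b]; push_cast; ring
  have hpiece : ∀ k < n, ∀ x ∈ Icc (b k) (b (k + 1)),
      spline n a x = (a k - k * (a (k + 1) - a k)) + n * (a (k + 1) - a k) * x :=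
    fun k hk x hx => by
    rw [spline_eq_of_mem_Icc hk (by simpa [b] using hx)]
    ring
  have hcont : Continuous fun x => |spline n a (x + h) - spline n a x| :=
    (((lipschitzWith_spline n a).continuous.comp (continuous_add_const h)).sub
      (lipschitzWith_spline n a).continuous).abs
  have hsplit := integral_eq_sum_integral_split_adjacent hcont b h (n - 1)
  rw [Nat.sub_add_cancel hn] at hsplit
  have hends : b 0 = 0 ∧ b n = 1 := ⟨by simp [b], by simp [b, hn'.ne']⟩
  rw [hends.1, hends.2] at hsplit
  have hA : ∀ k ∈ Finset.range n, ∫ x in b k..(b (k + 1) - h), |spline n a (x + h) - spline n a x|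
      = n * h * (1 / n - h) * |a (k + 1) - a k| := fun k hk => by
    rw [integral_abs_shift_of_affine hh.le (by rw [hstep]; linarith)
      (hpiece k (Finset.mem_range.1 hk)), hstep, abs_mul, Nat.abs_cast]
    ring
  have hB : ∀ k ∈ Finset.range (n - 1),
      ∫ x in (b (k + 1) - h)..b (k + 1), |spline n a (x + h) - spline n a x|
      = n * h * h * ∫ t in (0 : ℝ)..1, |(a (k + 1) - a k) * (1 - t) + (a (k + 2) - a (k + 1)) * t|
      := fun k hk => by
    have hk' : k + 1 < n := by have := Finset.mem_range.1 hk; omega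
    rw [integral_abs_shift_of_kink hh
      (fun x hx => hpiece k (by omega) x ⟨by linarith [hstep k, hx.1], hx.2⟩)
      (fun x hx => hpiece (k + 1) hk' x ⟨hx.1, by linarith [hstep (k + 1), hx.2]⟩)]
    simp_rw [mul_assoc (n : ℝ), ← mul_add, abs_mul, Nat.abs_cast,
      intervalIntegral.integral_const_mul]
    ring
  rw [hsplit, Finset.sum_congr rfl hA, Finset.sum_congr rfl hB, ← Finset.mul_sum, ← Finset.mul_sum]
  ring

end Spline

theorem sum_Icc_one_eq_sum_range {M : Type*} [AddCommMonoid M] (g : ℕ → M) (m : ℕ) :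
    ∑ i ∈ Finset.Icc 1 m, g i = ∑ k ∈ Finset.range m, g (k + 1) := by
  rw [← Finset.Ico_add_one_right_eq_Icc, Finset.sum_Ico_eq_sum_range, add_tsub_cancel_right]
  simp only [add_comm]

theorem stmt_18 (n : ℕ) (hn : 2 ≤ n) (a : ℕ → ℝ)
    (φn : ℝ → ℝ)
    (hφn : φn = Set.indicator (Set.Icc (-(1 / (n : ℝ))) (1 / (n : ℝ)))
      (fun _ => (n : ℝ) / 2))
    (g : ℕ → ℝ → ℝ) (hg : ∀ i, g i = fun x => max (1 - n * |x - (i : ℝ) / n|) 0)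
    (f : ℝ → ℝ) (hf : f = fun x => ∑ i ∈ Finset.range (n + 1), a i * g i x) :
    R1d φn f =
      (∑ i ∈ Finset.Icc 1 n, |a i - a (i - 1)| / 2) +
      ∑ i ∈ Finset.Icc 1 (n - 1),
        (if Real.sign (a (i - 1) - a i) = Real.sign (a i - a (i + 1)) then
          |a (i + 1) - a (i - 1)| / 4
        else
          ((a i - a (i - 1)) ^ 2 + (a i - a (i + 1)) ^ 2) /
            (4 * (|a i - a (i - 1)| + |a i - a (i + 1)|))) := by
  have hn0 : 0 < n := by omega
  have hn' : (0 : ℝ) < n := by exact_mod_cast hn0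
  have hfs : f = spline n a := by subst hf; ext x; simp only [spline, hat, hg]
  subst hφn hfs
  rw [R1d_indicator_Icc (lipschitzWith_spline n a) (by positivity)
    (div_le_one_of_le₀ (by exact_mod_cast (by omega : 1 ≤ n)) hn'.le)]
  have hG : ∀ h ∈ uIoc (0 : ℝ) (1 / n),
      (∫ x in (0 : ℝ)..(1 - h), |spline n a (x + h) - spline n a x|) / h =
        n * ((1 / n - h) * ∑ k ∈ Finset.range n, |a (k + 1) - a k| +
          h * ∑ k ∈ Finset.range (n - 1),
            ∫ t in (0 : ℝ)..1, |(a (k + 1) - a k) * (1 - t) + (a (k + 2) - a (k + 1)) * t|) := by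
    intro h hh
    rw [uIoc_of_le (by positivity)] at hh
    rw [integral_abs_shift_spline hn0 hh.1 hh.2]
    field_simp [hh.1.ne']
  rw [intervalIntegral.integral_congr_ae (ae_of_all _ hG), intervalIntegral.integral_const_mul,
    integral_sub_mul_add_mul, sum_Icc_one_eq_sum_range, sum_Icc_one_eq_sum_range]
  simp only [add_tsub_cancel_right, ← half_integral_abs_interpolate_sub, ← Finset.sum_div]
  field_simp
end
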